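/- There exists a constant C > 0 such that the following holds: for all δ > 0, every real K ≥ 1, every function u : ℤ³ → ℂ with u(0) = 0 and |u(α)| ≤ δ/|α|² for all α with |α| ≥ K, and every k ∈ ℤ³ with |k| ≥ 2K, one has Σ_{α ∈ ℤ³, |α| ≤ 2|k|, K ≤ |k−α| ≤ |k|/2} |α|·|u(α)|·|u(k−α)| ≤ C·δ². -/

import Mathlib

/-!
For `α` in the range of summation the triangle inequality gives `|α| ≥ |k|/2 ≥ K`, so each term
is at most `(2δ²/|k|) · |k - α|⁻²`. With `β = k - α` it remains to bound `∑ |β|⁻²` over nonzero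
lattice points with `|β| ≤ |k|/2` by `O(|k|)`: the sup-norm shell `{‖β‖_∞ = m}` has at most
`26 m²` points, each contributing at most `m⁻²`, and at most `|k|/2` shells are met.
-/

/-- The Euclidean norm of a lattice point in `ℤ³`. -/
noncomputable def znorm (a : Fin 3 → ℤ) : ℝ := Real.sqrt (∑ i, ((a i : ℝ)) ^ 2)

open Finset

section SupNatAbs

variable {ι : Type*} [Fintype ι]

def supNatAbs (a : ι → ℤ) : ℕ := univ.sup fun i => (a i).natAbs

lemma supNatAbs_le_iff {a : ι → ℤ} {n : ℕ} : supNatAbs a ≤ n ↔ -(n : ι → ℤ) ≤ a ∧ a ≤ n := by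
  simp only [supNatAbs, Finset.sup_le_iff, mem_univ, true_implies, Pi.le_def, ← forall_and]
  refine forall_congr' fun i => ?_
  simp only [Pi.neg_apply, Pi.natCast_apply]
  omega

lemma supNatAbs_eq_zero {a : ι → ℤ} : supNatAbs a = 0 ↔ a = 0 := by
  simp [supNatAbs, funext_iff]

variable [DecidableEq ι]

lemma mem_box_iff_supNatAbs_eq {a : ι → ℤ} {n : ℕ} :
    a ∈ (box n : Finset (ι → ℤ)) ↔ supNatAbs a = n := by
  cases n with
  | zero => rw [box_zero, mem_singleton, supNatAbs_eq_zero]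
  | succ n =>
    rw [box_succ_eq_sdiff, mem_sdiff, mem_Icc, mem_Icc, ← supNatAbs_le_iff, ← supNatAbs_le_iff]
    omega

lemma Pi.card_box_succ (n : ℕ) :
    #(box (n + 1) : Finset (ι → ℤ)) =
      (2 * n + 3) ^ Fintype.card ι - (2 * n + 1) ^ Fintype.card ι := by
  have hIcc : ∀ m : ℕ, #(Icc (-(m : ι → ℤ)) m) = (2 * m + 1) ^ Fintype.card ι := by
    intro m
    rw [Pi.card_Icc, ← Finset.card_univ, ← prod_const]
    refine prod_congr rfl fun i _ => ?_
    simp only [Pi.neg_apply, Pi.natCast_apply, Int.card_Icc]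
    omega
  rw [box_succ_eq_sdiff, card_sdiff_of_subset (Icc_subset_Icc (by simp) (by simp)), hIcc, hIcc]
  rfl

end SupNatAbs

lemma card_box_fin_three_le (n : ℕ) :
    (#(box (n + 1) : Finset (Fin 3 → ℤ)) : ℝ) ≤ 26 * ((n + 1 : ℕ) : ℝ) ^ 2 := by
  rw [Pi.card_box_succ, Fintype.card_fin, Nat.cast_sub (by gcongr; omega)]
  push_cast
  -- `(2n + 3)³ - (2n + 1)³ = 24 (n + 1)² + 2`
  nlinarith [(n.cast_nonneg : (0 : ℝ) ≤ n)]

lemma znorm_eq_norm (a : Fin 3 → ℤ) :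
    znorm a = ‖(WithLp.toLp 2 fun i => (a i : ℝ) : EuclideanSpace ℝ (Fin 3))‖ := by
  simp [EuclideanSpace.norm_eq, znorm]

lemma znorm_nonneg (a : Fin 3 → ℤ) : 0 ≤ znorm a := Real.sqrt_nonneg _

lemma znorm_le_znorm_sub_add (k a : Fin 3 → ℤ) : znorm k ≤ znorm (k - a) + znorm a := by
  have hsplit : (WithLp.toLp 2 fun i => (k i : ℝ) : EuclideanSpace ℝ (Fin 3)) =
      (WithLp.toLp 2 fun i => ((k - a) i : ℝ)) + WithLp.toLp 2 fun i => (a i : ℝ) := by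
    ext i
    simp
  simpa only [znorm_eq_norm, hsplit] using norm_add_le _ _

lemma natAbs_le_znorm (a : Fin 3 → ℤ) (i : Fin 3) : ((a i).natAbs : ℝ) ≤ znorm a := by
  simpa [znorm_eq_norm, Nat.cast_natAbs] using
    PiLp.norm_apply_le (WithLp.toLp 2 fun i => (a i : ℝ) : EuclideanSpace ℝ (Fin 3)) i

lemma supNatAbs_le_znorm (a : Fin 3 → ℤ) : (supNatAbs a : ℝ) ≤ znorm a :=
  calc (supNatAbs a : ℝ) ≤ ⌊znorm a⌋₊ :=
        Nat.cast_le.2 <| Finset.sup_le fun i _ => Nat.le_floor (natAbs_le_znorm a i)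
    _ ≤ znorm a := Nat.floor_le (znorm_nonneg a)

lemma sum_filter_supNatAbs_eq_inv_znorm_sq_le (t : Finset (Fin 3 → ℤ)) {m : ℕ} (hm : m ≠ 0) :
    ∑ β ∈ t with supNatAbs β = m, (znorm β ^ 2)⁻¹ ≤ 26 := by
  obtain ⟨n, rfl⟩ := Nat.exists_eq_add_one_of_ne_zero hm
  have hsub : {β ∈ t | supNatAbs β = n + 1} ⊆ box (n + 1) := fun β hβ =>
    mem_box_iff_supNatAbs_eq.2 (mem_filter.1 hβ).2
  calc ∑ β ∈ t with supNatAbs β = n + 1, (znorm β ^ 2)⁻¹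
      ≤ ∑ β ∈ t with supNatAbs β = n + 1, (((n + 1 : ℕ) : ℝ) ^ 2)⁻¹ := by
        refine sum_le_sum fun β hβ => ?_
        have hle : ((n + 1 : ℕ) : ℝ) ≤ znorm β := (mem_filter.1 hβ).2 ▸ supNatAbs_le_znorm β
        gcongr
    _ = #{β ∈ t | supNatAbs β = n + 1} * (((n + 1 : ℕ) : ℝ) ^ 2)⁻¹ := by
        rw [sum_const, nsmul_eq_mul]
    _ ≤ 26 * ((n + 1 : ℕ) : ℝ) ^ 2 * (((n + 1 : ℕ) : ℝ) ^ 2)⁻¹ := by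
        gcongr
        exact (Nat.cast_le.2 (card_le_card hsub)).trans (card_box_fin_three_le n)
    _ = 26 := by field_simp

lemma sum_inv_znorm_sq_le {R : ℝ} (hR : 0 ≤ R) (t : Finset (Fin 3 → ℤ))
    (ht : ∀ β ∈ t, 0 < znorm β ∧ znorm β ≤ R) : ∑ β ∈ t, (znorm β ^ 2)⁻¹ ≤ 26 * R := by
  have hmaps : ∀ β ∈ t, supNatAbs β ∈ Icc 1 ⌊R⌋₊ := by
    intro β hβ
    refine mem_Icc.2 ⟨Nat.one_le_iff_ne_zero.2 fun h => ?_, ?_⟩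
    · simpa [supNatAbs_eq_zero.1 h, znorm] using (ht β hβ).1
    · exact Nat.le_floor ((supNatAbs_le_znorm β).trans (ht β hβ).2)
  calc ∑ β ∈ t, (znorm β ^ 2)⁻¹
      = ∑ m ∈ Icc 1 ⌊R⌋₊, ∑ β ∈ t with supNatAbs β = m, (znorm β ^ 2)⁻¹ :=
        (sum_fiberwise_of_maps_to hmaps _).symm
    _ ≤ ∑ m ∈ Icc 1 ⌊R⌋₊, (26 : ℝ) := sum_le_sum fun m hm =>
        sum_filter_supNatAbs_eq_inv_znorm_sq_le t (by have := (mem_Icc.1 hm).1; omega)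
    _ ≤ 26 * R := by
        rw [sum_const, Nat.card_Icc, nsmul_eq_mul, mul_comm]
        gcongr
        exact (Nat.cast_le.2 (by omega)).trans (Nat.floor_le hR)

lemma znorm_mul_norm_mul_norm_le {E : Type*} [SeminormedAddGroup E] {u : (Fin 3 → ℤ) → E}
    {δ K : ℝ} (hδ : 0 ≤ δ) (hK : 0 < K) (hu : ∀ α, K ≤ znorm α → ‖u α‖ ≤ δ / znorm α ^ 2)
    {k α : Fin 3 → ℤ} (hk : 2 * K ≤ znorm k) (hKβ : K ≤ znorm (k - α))
    (hβk : znorm (k - α) ≤ znorm k / 2) :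
    znorm α * ‖u α‖ * ‖u (k - α)‖ ≤ 2 * δ ^ 2 / znorm k * (znorm (k - α) ^ 2)⁻¹ := by
  have hαk : znorm k / 2 ≤ znorm α := by linarith [znorm_le_znorm_sub_add k α]
  have hα : 0 < znorm α := by linarith
  have hβ : 0 < znorm (k - α) := by linarith
  calc znorm α * ‖u α‖ * ‖u (k - α)‖
      ≤ znorm α * (δ / znorm α ^ 2) * (δ / znorm (k - α) ^ 2) := by
        gcongr
        · exact hu α (by linarith)
        · exact hu _ hKβ
    _ = δ / znorm α * δ * (znorm (k - α) ^ 2)⁻¹ := by field_simp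
    _ ≤ δ / (znorm k / 2) * δ * (znorm (k - α) ^ 2)⁻¹ := by gcongr; linarith
    _ = 2 * δ ^ 2 / znorm k * (znorm (k - α) ^ 2)⁻¹ := by field_simp

/-- There is a constant `C > 0` such that: for all `δ > 0`, `K ≥ 1`, every `u : ℤ³ → ℂ` with
`u 0 = 0` and `|u α| ≤ δ/|α|²` for `|α| ≥ K`, and every `k` with `|k| ≥ 2K`,
`∑_{|α| ≤ 2|k|, K ≤ |k−α| ≤ |k|/2} |α|·|u α|·|u (k−α)| ≤ C·δ²`. -/
theorem middle_cofrequency_piece_bound :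
    ∃ C : ℝ, 0 < C ∧
      ∀ (δ K : ℝ), 0 < δ → 1 ≤ K →
        ∀ u : (Fin 3 → ℤ) → ℂ, u 0 = 0 →
          (∀ α : Fin 3 → ℤ, K ≤ znorm α → ‖u α‖ ≤ δ / znorm α ^ 2) →
          ∀ k : Fin 3 → ℤ, 2 * K ≤ znorm k →
            (∑' α : {a : Fin 3 → ℤ //
                znorm a ≤ 2 * znorm k ∧ K ≤ znorm (k - a) ∧ znorm (k - a) ≤ znorm k / 2},
              znorm α.1 * ‖u α.1‖ * ‖u (k - α.1)‖)
              ≤ C * δ ^ 2 := by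
  refine ⟨26, by norm_num, fun δ K hδ hK u _ hu k hk => ?_⟩
  have hk0 : 0 < znorm k := by linarith
  refine tsum_le_of_sum_le' (by positivity) fun s => ?_
  have hshell : ∑ α ∈ s, (znorm (k - α.1) ^ 2)⁻¹ ≤ 26 * (znorm k / 2) := by
    rw [← sum_image (f := fun β => (znorm β ^ 2)⁻¹) fun α _ β _ h =>
      Subtype.ext (sub_right_injective h)]
    refine sum_inv_znorm_sq_le (by positivity) _ fun β hβ => ?_
    obtain ⟨α, -, rfl⟩ := mem_image.1 hβ
    exact ⟨by linarith [α.2.2.1], α.2.2.2⟩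
  calc ∑ α ∈ s, znorm α.1 * ‖u α.1‖ * ‖u (k - α.1)‖
      ≤ ∑ α ∈ s, 2 * δ ^ 2 / znorm k * (znorm (k - α.1) ^ 2)⁻¹ := sum_le_sum fun α _ =>
        znorm_mul_norm_mul_norm_le hδ.le (by linarith) hu hk α.2.2.1 α.2.2.2
    _ = 2 * δ ^ 2 / znorm k * ∑ α ∈ s, (znorm (k - α.1) ^ 2)⁻¹ := (mul_sum ..).symm
    _ ≤ 2 * δ ^ 2 / znorm k * (26 * (znorm k / 2)) := by gcongr
    _ = 26 * δ ^ 2 := by field_simp
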